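/- The multiplicative monoid of all n×n complex matrices M_n(ℂ) is generated by the generalized elementary Jacobi matrices: the matrices I + t·E_{i,i+1}, I + t·E_{i+1,i} for 1 ≤ i ≤ n-1, and I + (t-1)·E_{i,i} for 1 ≤ i ≤ n, where t ranges over all of ℂ. -/

import Mathlib

/-!
Over a field every square matrix is `L * D * L'` with `D` diagonal and `L`, `L'` products of
transvections (Gaussian elimination). A diagonal matrix is a product of matrices
`diagonal (Pi.mulSingle i c) = 1 + single i i (c - 1)`. Finally, the Steinberg relation
`[x_ik(a), x_kj(b)] = x_ij(ab)` lets one write a transvection `x_ij` as a commutator of `x_ik`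
and `x_kj`, where `k` is the neighbour of `i` towards `j`; by induction on `|i - j|` all
transvections are products of those with adjacent indices.
-/

open Matrix

namespace Matrix

variable {R : Type*} [CommRing R]

theorem transvection_commutator {ι : Type*} [DecidableEq ι] [Fintype ι] {i j k : ι}
    (hik : i ≠ k) (hkj : k ≠ j) (hij : i ≠ j) (a b : R) :
    transvection i k a * transvection k j b * transvection i k (-a) * transvection k j (-b) =
      transvection i j (a * b) := by
  simp only [transvection, Matrix.add_mul, Matrix.mul_add, Matrix.one_mul, Matrix.mul_one,
    single_mul_single_same, single_mul_single_of_ne _ _ _ _ hik.symm,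
    single_mul_single_of_ne _ _ _ _ hkj.symm, single_mul_single_of_ne _ _ _ _ hij.symm,
    Matrix.zero_mul, mul_neg, neg_mul, ← single_neg]
  abel

theorem diagonal_mulSingle {ι : Type*} [DecidableEq ι] (i : ι) (c : R) :
    diagonal (Pi.mulSingle i c) = 1 + single i i (c - 1) := by
  ext x y
  by_cases hxy : x = y
  · subst hxy
    by_cases hix : i = x
    · subst hix; simp
    · simp [Ne.symm hix, hix]
  · simp only [diagonal_apply_ne _ hxy, add_apply, one_apply_ne hxy, zero_add]
    rw [single_apply_of_ne]
    rintro ⟨rfl, rfl⟩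
    exact hxy rfl

theorem submonoid_eq_top_of_diagonal_mem_of_transvection_mem {ι K : Type*} [DecidableEq ι]
    [Fintype ι] [Field K] {M : Submonoid (Matrix ι ι K)}
    (hdiag : ∀ i c, diagonal (Pi.mulSingle i c) ∈ M)
    (htransvec : ∀ i j, i ≠ j → ∀ c, transvection i j c ∈ M) : M = ⊤ := by
  refine (Submonoid.eq_top_iff' M).2 fun A =>
    diagonal_transvection_induction (· ∈ M) A (fun D _ => ?_)
      (fun t => htransvec t.i t.j t.hij t.c) fun _ _ => mul_mem
  show D ∈ M.comap (diagonalRingHom ι K : (ι → K) →* Matrix ι ι K)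
  exact Submonoid.pi_mem_of_mulSingle_mem D fun i => hdiag i (D i)

theorem transvection_mem_of_adjacent {n : ℕ} {M : Submonoid (Matrix (Fin n) (Fin n) R)}
    (hadj : ∀ i j : Fin n, (j : ℕ) = i + 1 → ∀ c,
      transvection i j c ∈ M ∧ transvection j i c ∈ M)
    {i j : Fin n} (hij : i ≠ j) (c : R) : transvection i j c ∈ M := by
  obtain ⟨d, hd⟩ : ∃ d, (i : ℕ) - j + (j - i) = d := ⟨_, rfl⟩
  induction d using Nat.strong_induction_on generalizing i c with
  | _ d ih =>
    by_cases hnear : (j : ℕ) = i + 1 ∨ (i : ℕ) = j + 1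
    · rcases hnear with h | h
      · exact (hadj i j h c).1
      · exact (hadj j i h c).2
    obtain ⟨k, hik, hkj, hk, hkd⟩ : ∃ k : Fin n, i ≠ k ∧ k ≠ j ∧
        (∀ a, transvection i k a ∈ M) ∧ (k : ℕ) - j + (j - k) < d := by
      rcases lt_or_gt_of_ne (Fin.val_ne_of_ne hij) with h | h
      · exact ⟨⟨i + 1, by omega⟩, Fin.ne_of_val_ne (by simp), Fin.ne_of_val_ne (by simp; omega),
          fun a => (hadj i _ rfl a).1, by simp; omega⟩
      · exact ⟨⟨i - 1, by omega⟩, Fin.ne_of_val_ne (by simp; omega),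
          Fin.ne_of_val_ne (by simp; omega), fun a => (hadj _ i (by simp; omega) a).2,
          by simp; omega⟩
    have hkj' : ∀ b, transvection k j b ∈ M := fun b => ih _ hkd hkj b rfl
    rw [← mul_one c, ← transvection_commutator hik hkj hij]
    exact mul_mem (mul_mem (mul_mem (hk c) (hkj' 1)) (hk (-c))) (hkj' (-1))

end Matrix

/-- The multiplicative monoid `M_n(ℂ)` is generated by the generalized elementary
Jacobi matrices `I + t·E_{i,i+1}`, `I + t·E_{i+1,i}` and `I + (t-1)·E_{i,i}`,
where `t` ranges over all of `ℂ`. -/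
theorem stmt3 (n : ℕ) :
    Submonoid.closure {A : Matrix (Fin n) (Fin n) ℂ |
        (∃ (i j : Fin n) (t : ℂ), (j : ℕ) = (i : ℕ) + 1 ∧
          (A = 1 + Matrix.single i j t ∨ A = 1 + Matrix.single j i t)) ∨
        (∃ (i : Fin n) (t : ℂ), A = 1 + Matrix.single i i (t - 1))} = ⊤ := by
  refine submonoid_eq_top_of_diagonal_mem_of_transvection_mem
    (fun i c => Submonoid.subset_closure (Or.inr ⟨i, c, diagonal_mulSingle i c⟩))
    fun i j hij c => transvection_mem_of_adjacent (fun i j h c => ⟨?_, ?_⟩) hij c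
  · exact Submonoid.subset_closure (Or.inl ⟨i, j, c, h, Or.inl rfl⟩)
  · exact Submonoid.subset_closure (Or.inl ⟨i, j, c, h, Or.inr rfl⟩)
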